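/- arXiv:2103.09370 — 2 statements merged into one kernel-verified Lean document; each statement's English description precedes it below -/
import Mathlib

section
/- Let (M,d) be a 1-bounded turning arc, let r > 0, and let T ⊆ M be a nonempty set with d_ur-diameter less than r, i.e., sup_{x,y ∈ T} d_ur(x,y) < r. Then there exist subsets S, A ⊆ M such that T ⊆ S ∪ A, H¹_r(A) < r, and H¹(S) < ∞, where H¹_r and H¹ are computed with respect to the metric d. -/
open Metric Set MeasureTheory
open scoped ENNReal NNReal

/-- The pseudometric `d_ur`: `d_ur(x,y)` is the infimum of `λ([min K, max K] ∖ K)` over all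
nonempty compact `K ⊆ ℝ` and 1-Lipschitz maps `γ : K → M` with `γ(min K) = x` and
`γ(max K) = y`. -/
noncomputable def dur {M : Type*} [MetricSpace M] (x y : M) : ℝ :=
  sInf { c : ℝ | ∃ (K : Set ℝ) (γ : ℝ → M), K.Nonempty ∧ IsCompact K ∧
    LipschitzOnWith 1 γ K ∧ γ (sInf K) = x ∧ γ (sSup K) = y ∧
    c = (volume (Set.Icc (sInf K) (sSup K) \ K)).toReal }

/-- The diameter of a set with respect to the pseudometric `d_ur`. -/
noncomputable def durDiam {M : Type*} [MetricSpace M] (E : Set M) : ℝ≥0∞ :=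
  ⨆ (x) (_ : x ∈ E) (y) (_ : y ∈ E), ENNReal.ofReal (dur x y)

/-- The Hausdorff 1-pre-measure at scale `δ` (with respect to the metric `d`): the infimum
of `∑ diam (E i)` over countable covers by sets of diameter `< δ`. -/
noncomputable def hausdorffPre {Ω : Type*} [MetricSpace Ω] (δ : ℝ≥0∞) (S : Set Ω) : ℝ≥0∞ :=
  ⨅ (E : ℕ → Set Ω) (_ : S ⊆ ⋃ i, E i) (_ : ∀ i, EMetric.diam (E i) < δ),
    ∑' i, EMetric.diam (E i)

/-- Extraction of a witness from `dur x y < c`. -/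
lemma dur_witness {M : Type*} [MetricSpace M] (x y : M) {c : ℝ} (hc : dur x y < c) :
    ∃ (K : Set ℝ) (γ : ℝ → M), K.Nonempty ∧ IsCompact K ∧
      LipschitzOnWith 1 γ K ∧ γ (sInf K) = x ∧ γ (sSup K) = y ∧
      (volume (Set.Icc (sInf K) (sSup K) \ K)).toReal < c := by
  classical
  set c0 := dist x y with hc0
  have hc0n : 0 ≤ c0 := dist_nonneg
  set K0 : Set ℝ := {0, c0} with hK0
  set γ0 : ℝ → M := fun z => if z ≤ 0 then x else y with hγ0
  have hInf : sInf K0 = 0 := by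
    rw [hK0, csInf_pair]
    exact min_eq_left hc0n
  have hSup : sSup K0 = c0 := by
    rw [hK0, csSup_pair]
    exact max_eq_right hc0n
  have hmem : ∀ p ∈ K0, γ0 p = if p ≤ 0 then x else y := fun p _ => rfl
  have hlip : LipschitzOnWith 1 γ0 K0 := by
    apply LipschitzOnWith.of_dist_le_mul
    intro p hp q hq
    rcases hp with hp | hp <;> rcases hq with hq | hq <;> subst hp <;> subst hq <;>
      simp only [γ0]
    · simp
    · by_cases h0 : c0 ≤ 0
      · have : c0 = 0 := le_antisymm h0 hc0n
        simp [this]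
      · rw [if_pos le_rfl, if_neg h0, Real.dist_eq]
        simp only [NNReal.coe_one, one_mul]
        rw [abs_sub_comm, sub_zero, abs_of_nonneg hc0n]
    · by_cases h0 : c0 ≤ 0
      · have : c0 = 0 := le_antisymm h0 hc0n
        simp [this]
      · rw [if_neg h0, if_pos le_rfl, dist_comm y x, Real.dist_eq]
        simp only [NNReal.coe_one, one_mul]
        rw [sub_zero, abs_of_nonneg hc0n]
    · simp
  have hx0 : γ0 (sInf K0) = x := by rw [hInf]; simp [γ0]
  have hy0 : γ0 (sSup K0) = y := by
    rw [hSup]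
    by_cases h0 : c0 ≤ 0
    · have hcc : c0 = 0 := le_antisymm h0 hc0n
      have : x = y := by rwa [hc0, dist_eq_zero] at hcc
      simp [γ0, hcc, this]
    · simp [γ0, h0]
  have hne : { c : ℝ | ∃ (K : Set ℝ) (γ : ℝ → M), K.Nonempty ∧ IsCompact K ∧
      LipschitzOnWith 1 γ K ∧ γ (sInf K) = x ∧ γ (sSup K) = y ∧
      c = (volume (Set.Icc (sInf K) (sSup K) \ K)).toReal }.Nonempty := by
    refine ⟨_, K0, γ0, ⟨0, by simp [K0]⟩, ?_, hlip, hx0, hy0, rfl⟩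
    exact ((Set.finite_singleton c0).insert 0).isCompact
  obtain ⟨c', hc', hlt⟩ := exists_lt_of_csInf_lt hne hc
  obtain ⟨K, γ, h1, h2, h3, h4, h5, h6⟩ := hc'
  exact ⟨K, γ, h1, h2, h3, h4, h5, h6 ▸ hlt⟩

lemma dur_nonneg {M : Type*} [MetricSpace M] (x y : M) : 0 ≤ dur x y := by
  apply Real.sInf_nonneg
  rintro c ⟨K, γ, -, -, -, -, -, rfl⟩
  exact ENNReal.toReal_nonneg

/-- If `(M,d)` is a 1-bounded turning arc, `r > 0`, and `T ⊆ M` is a nonempty set of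
`d_ur`-diameter less than `r`, then there are `S, A ⊆ M` with `T ⊆ S ∪ A`,
`H¹_r(A) < r` and `H¹(S) < ∞` (both computed with respect to `d`). -/
theorem inverse_diam_bounded_turning_arc
    {M : Type*} [MetricSpace M] [MeasurableSpace M] [BorelSpace M]
    (h : Set.Icc (0:ℝ) 1 ≃ₜ M)
    (hbt : ∀ s t u : Set.Icc (0:ℝ) 1, s ≤ t → t ≤ u →
      max (dist (h s) (h t)) (dist (h t) (h u)) ≤ dist (h s) (h u))
    (r : ℝ) (hr : 0 < r) (T : Set M) (hT : T.Nonempty)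
    (hdiam : durDiam T < ENNReal.ofReal r) :
    ∃ S A : Set M, T ⊆ S ∪ A ∧ hausdorffPre (ENNReal.ofReal r) A < ENNReal.ofReal r ∧
      μH[1] S < ⊤ := by
  classical
  -- bounded turning consequences
  have L1 : ∀ s u z z' : Set.Icc (0:ℝ) 1, s ≤ z → z ≤ z' → z' ≤ u →
      dist (h z) (h z') ≤ dist (h s) (h u) := by
    intro s u z z' h1 h2 h3
    have hA : dist (h z) (h z') ≤ dist (h z) (h u) :=
      le_trans (le_max_left _ _) (hbt z z' u h2 h3)
    have hB : dist (h z) (h u) ≤ dist (h s) (h u) :=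
      le_trans (le_max_right _ _) (hbt s z u h1 (h2.trans h3))
    exact hA.trans hB
  -- set-up of constants
  set ρ : ℝ := (durDiam T).toReal with hρ
  have hdne : durDiam T ≠ ⊤ := hdiam.ne_top
  have hρr : ρ < r := by
    have := ENNReal.toReal_strict_mono (by simp) hdiam
    rwa [ENNReal.toReal_ofReal hr.le] at this
  have hρ0 : 0 ≤ ρ := ENNReal.toReal_nonneg
  set ε : ℝ := (r - ρ) / 4 with hε
  have hε0 : 0 < ε := by simp only [hε]; linarith
  -- parameter set of T
  set P : Set ℝ := (fun z : Set.Icc (0:ℝ) 1 => (z : ℝ)) '' (h.symm '' T) with hP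
  have hPne : P.Nonempty := hT.image _ |>.image _
  have hPsub : P ⊆ Set.Icc 0 1 := by
    rintro p ⟨z, _, rfl⟩; exact z.2
  have hPbdd : BddBelow P := ⟨0, fun p hp => (hPsub hp).1⟩
  have hPbdda : BddAbove P := ⟨1, fun p hp => (hPsub hp).2⟩
  set a : ℝ := sInf P with ha
  set b : ℝ := sSup P with hb
  have hab : a ≤ b := csInf_le_csSup hPne hPbdd hPbdda
  have ha01 : a ∈ Set.Icc (0:ℝ) 1 := by
    constructor
    · exact le_csInf hPne fun p hp => (hPsub hp).1
    · obtain ⟨p, hp⟩ := hPne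
      exact (csInf_le hPbdd hp).trans (hPsub hp).2
  have hb01 : b ∈ Set.Icc (0:ℝ) 1 := by
    constructor
    · obtain ⟨p, hp⟩ := hPne
      exact (hPsub hp).1.trans (le_csSup hPbdda hp)
    · exact csSup_le hPne fun p hp => (hPsub hp).2
  -- continuity at the endpoints
  obtain ⟨δ₁, hδ₁0, hδ₁⟩ := Metric.continuousAt_iff.mp (h.continuous.continuousAt
    (x := ⟨a, ha01⟩)) ε hε0
  obtain ⟨δ₂, hδ₂0, hδ₂⟩ := Metric.continuousAt_iff.mp (h.continuous.continuousAt
    (x := ⟨b, hb01⟩)) ε hε0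
  set δ : ℝ := min δ₁ δ₂ with hδ
  have hδ0 : 0 < δ := lt_min hδ₁0 hδ₂0
  obtain ⟨a0, ha0P, ha0⟩ : ∃ p ∈ P, p < a + δ :=
    exists_lt_of_csInf_lt hPne (by linarith)
  obtain ⟨b0, hb0P, hb0⟩ : ∃ p ∈ P, b - δ < p :=
    exists_lt_of_lt_csSup hPne (by linarith)
  set a' : ℝ := min a0 b0 with ha'
  set b' : ℝ := max a0 b0 with hb'
  have ha'P : a' ∈ P := by rcases min_cases a0 b0 with ⟨hh, _⟩ | ⟨hh, _⟩ <;> rw [ha', hh] <;> assumption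
  have hb'P : b' ∈ P := by rcases max_cases a0 b0 with ⟨hh, _⟩ | ⟨hh, _⟩ <;> rw [hb', hh] <;> assumption
  have ha'b' : a' ≤ b' := min_le_max
  have haa' : a ≤ a' := csInf_le hPbdd ha'P
  have hb'b : b' ≤ b := le_csSup hPbdda hb'P
  have ha'δ : a' < a + δ := lt_of_le_of_lt (min_le_left _ _) ha0
  have hb'δ : b - δ < b' := lt_of_lt_of_le hb0 (le_max_right _ _)
  set A' : Set.Icc (0:ℝ) 1 := ⟨a', hPsub ha'P⟩ with hA'
  set B' : Set.Icc (0:ℝ) 1 := ⟨b', hPsub hb'P⟩ with hB'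
  have hA'B' : A' ≤ B' := ha'b'
  -- membership of endpoints in T
  have hmemT : ∀ p (hp : p ∈ P), h ⟨p, hPsub hp⟩ ∈ T := by
    rintro p ⟨z, ⟨m, hm, rfl⟩, rfl⟩
    have : (⟨(h.symm m : ℝ), hPsub ⟨h.symm m, ⟨m, hm, rfl⟩, rfl⟩⟩ : Set.Icc (0:ℝ) 1)
        = h.symm m := rfl
    rw [this, h.apply_symm_apply]
    exact hm
  set x : M := h A' with hx
  set y : M := h B' with hy
  have hxT : x ∈ T := hmemT a' ha'P
  have hyT : y ∈ T := hmemT b' hb'P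
  -- dur bound
  have hdxy : dur x y ≤ ρ := by
    have h1 : ENNReal.ofReal (dur x y) ≤ durDiam T := by
      rw [durDiam]
      exact le_iSup_of_le x (le_iSup_of_le hxT (le_iSup_of_le y (le_iSup_of_le hyT le_rfl)))
    have h2 := ENNReal.toReal_mono hdne h1
    rwa [ENNReal.toReal_ofReal (dur_nonneg x y)] at h2
  have hdurlt : dur x y < ρ + ε := lt_of_le_of_lt hdxy (by linarith)
  -- extract the witness curve
  obtain ⟨K, γ, hKne, hKc, hγlip, hγ0, hγ1, hgap⟩ := dur_witness x y hdurlt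
  set α : ℝ := sInf K with hα
  set β : ℝ := sSup K with hβ
  have hαK : α ∈ K := hKc.sInf_mem hKne
  have hβK : β ∈ K := hKc.sSup_mem hKne
  have hKsub : K ⊆ Set.Icc α β := fun z hz =>
    ⟨csInf_le hKc.bddBelow hz, le_csSup hKc.bddAbove hz⟩
  have hαβ : α ≤ β := (hKsub hαK).2
  have hgapfin : volume (Set.Icc α β \ K) ≠ ⊤ := by
    refine ne_top_of_le_ne_top ?_ (measure_mono Set.diff_subset)
    rw [Real.volume_Icc]
    exact ENNReal.ofReal_ne_top
  have hgapE : volume (Set.Icc α β \ K) < ENNReal.ofReal (ρ + ε) :=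
    (ENNReal.lt_ofReal_iff_toReal_lt hgapfin).mpr hgap
  -- the parameter function
  set ψ : ℝ → ℝ := fun z => ((h.symm (γ z) : Set.Icc (0:ℝ) 1) : ℝ) with hψ
  have hψcont : ContinuousOn ψ K := by
    exact continuous_subtype_val.comp_continuousOn
      (h.symm.continuous.comp_continuousOn hγlip.continuousOn)
  have hψα : ψ α = a' := by
    simp only [hψ, hγ0, hx, hA', Homeomorph.symm_apply_apply]
  have hψβ : ψ β = b' := by
    simp only [hψ, hγ1, hy, hB', Homeomorph.symm_apply_apply]
  -- gaps of K
  set G : Set (ℝ × ℝ) := {g | g.1 ∈ K ∧ g.2 ∈ K ∧ g.1 < g.2 ∧ Set.Ioo g.1 g.2 ∩ K = ∅}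
    with hG
  have hGdisj : ∀ g ∈ G, ∀ g' ∈ G, g ≠ g' → Set.Ioo g.1 g.2 ∩ Set.Ioo g'.1 g'.2 = ∅ := by
    intro g hg g' hg' hne
    by_contra hcon
    obtain ⟨w, hw1, hw2⟩ := Set.nonempty_iff_ne_empty.mpr hcon
    have h11 : g.1 = g'.1 := by
      rcases lt_trichotomy g.1 g'.1 with hlt | heq | hgt
      · exact absurd (Set.eq_empty_iff_forall_notMem.mp hg.2.2.2 g'.1
          ⟨⟨hlt, hw2.1.trans hw1.2⟩, hg'.1⟩) (fun hc => hc)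
      · exact heq
      · exact absurd (Set.eq_empty_iff_forall_notMem.mp hg'.2.2.2 g.1
          ⟨⟨hgt, hw1.1.trans hw2.2⟩, hg.1⟩) (fun hc => hc)
    have h22 : g.2 = g'.2 := by
      rcases lt_trichotomy g.2 g'.2 with hlt | heq | hgt
      · exact absurd (Set.eq_empty_iff_forall_notMem.mp hg'.2.2.2 g.2
          ⟨⟨hw2.1.trans hw1.2, hlt⟩, hg.2.1⟩) (fun hc => hc)
      · exact heq
      · exact absurd (Set.eq_empty_iff_forall_notMem.mp hg.2.2.2 g'.2
          ⟨⟨hw1.1.trans hw2.2, hgt⟩, hg'.2.1⟩) (fun hc => hc)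
    exact hne (Prod.ext h11 h22)
  -- countability of the set of gaps
  set q : ℝ × ℝ → ℚ := fun g =>
    if hg : ∃ s : ℚ, g.1 < (s : ℝ) ∧ (s : ℝ) < g.2 then hg.choose else 0 with hq
  have hqmem : ∀ g ∈ G, (q g : ℝ) ∈ Set.Ioo g.1 g.2 := by
    intro g hg
    have hex : ∃ s : ℚ, g.1 < (s : ℝ) ∧ (s : ℝ) < g.2 := exists_rat_btwn hg.2.2.1
    simp only [hq, dif_pos hex]
    exact ⟨hex.choose_spec.1, hex.choose_spec.2⟩
  have hGc : G.Countable := by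
    refine Set.MapsTo.countable_of_injOn (t := (Set.univ : Set ℚ))
      (fun g _ => Set.mem_univ (q g)) ?_ (Set.countable_univ)
    intro g hg g' hg' hqq
    by_contra hne
    have := hGdisj g hg g' hg' hne
    have hmem1 := hqmem g hg
    have hmem2 := hqmem g' hg'
    rw [hqq] at hmem1
    exact Set.eq_empty_iff_forall_notMem.mp this _ ⟨hmem1, hmem2⟩
  haveI : Countable ↥G := hGc.to_subtype
  set e : ℝ × ℝ → ℕ := fun g => Encodable.encode (q g) with he
  have heinj : ∀ g ∈ G, ∀ g' ∈ G, e g = e g' → g = g' := by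
    intro g hg g' hg' hee
    have hqq : q g = q g' := Encodable.encode_injective hee
    by_contra hne
    have := hGdisj g hg g' hg' hne
    have hmem1 := hqmem g hg
    have hmem2 := hqmem g' hg'
    rw [hqq] at hmem1
    exact Set.eq_empty_iff_forall_notMem.mp this _ ⟨hmem1, hmem2⟩
  -- the bridging sets
  set D : ℝ × ℝ → Set M := fun g =>
    h '' {z : Set.Icc (0:ℝ) 1 | min (ψ g.1) (ψ g.2) ≤ (z : ℝ) ∧
      (z : ℝ) ≤ max (ψ g.1) (ψ g.2)} with hD
  have hDdiam : ∀ g ∈ G, EMetric.diam (D g) ≤ ENNReal.ofReal (g.2 - g.1) := by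
    intro g hg
    apply EMetric.diam_le
    rintro m ⟨z, hz, rfl⟩ m' ⟨z', hz', rfl⟩
    rw [edist_dist]
    apply ENNReal.ofReal_le_ofReal
    have hdγ : dist (γ g.1) (γ g.2) ≤ g.2 - g.1 := by
      have := hγlip.dist_le_mul g.1 hg.1 g.2 hg.2.1
      rwa [NNReal.coe_one, one_mul, Real.dist_eq, abs_of_nonpos (by linarith [hg.2.2.1]),
        neg_sub] at this
    have key : ∀ w w' : Set.Icc (0:ℝ) 1,
        min (ψ g.1) (ψ g.2) ≤ (w : ℝ) → (w : ℝ) ≤ max (ψ g.1) (ψ g.2) →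
        min (ψ g.1) (ψ g.2) ≤ (w' : ℝ) → (w' : ℝ) ≤ max (ψ g.1) (ψ g.2) →
        w ≤ w' → dist (h w) (h w') ≤ g.2 - g.1 := by
      intro w w' hw1 hw2 hw'1 hw'2 hww'
      rcases le_total (ψ g.1) (ψ g.2) with hor | hor
      · have h1 : h.symm (γ g.1) ≤ w := by
          have hle : ψ g.1 ≤ (w : ℝ) := le_trans (min_eq_left hor).ge hw1
          exact Subtype.coe_le_coe.mp hle
        have h2 : w' ≤ h.symm (γ g.2) := by
          have hle : (w' : ℝ) ≤ ψ g.2 := le_trans hw'2 (max_eq_right hor).le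
          exact Subtype.coe_le_coe.mp hle
        have hth := L1 (h.symm (γ g.1)) (h.symm (γ g.2)) w w' h1 hww' h2
        rw [h.apply_symm_apply, h.apply_symm_apply] at hth
        exact hth.trans hdγ
      · have h1 : h.symm (γ g.2) ≤ w := by
          have hle : ψ g.2 ≤ (w : ℝ) := le_trans (min_eq_right hor).ge hw1
          exact Subtype.coe_le_coe.mp hle
        have h2 : w' ≤ h.symm (γ g.1) := by
          have hle : (w' : ℝ) ≤ ψ g.1 := le_trans hw'2 (max_eq_left hor).le
          exact Subtype.coe_le_coe.mp hle
        have hth := L1 (h.symm (γ g.2)) (h.symm (γ g.1)) w w' h1 hww' h2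
        rw [h.apply_symm_apply, h.apply_symm_apply] at hth
        rw [dist_comm (γ g.2) (γ g.1)] at hth
        exact hth.trans hdγ
    rcases le_total z z' with hzz | hzz
    · exact (key z z' hz.1 hz.2 hz'.1 hz'.2 hzz).trans le_rfl
    · rw [dist_comm]
      exact (key z' z hz'.1 hz'.2 hz.1 hz.2 hzz).trans le_rfl
  -- the main covering lemma: every point of the middle arc missed by the curve
  -- lies in a bridging set
  have hcover : ∀ t : Set.Icc (0:ℝ) 1, a' ≤ (t : ℝ) → (t : ℝ) ≤ b' →
      h t ∉ γ '' K → ∃ g ∈ G, h t ∈ D g := by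
    intro t hat hbt' hnot
    set Q : Set ℝ := (ψ '' K) ∩ Set.Icc a' b' with hQ
    have hQc : IsCompact Q := (hKc.image_of_continuousOn hψcont).inter_right isClosed_Icc
    have ha'Q : a' ∈ Q := ⟨⟨α, hαK, hψα⟩, Set.left_mem_Icc.mpr ha'b'⟩
    have hb'Q : b' ∈ Q := ⟨⟨β, hβK, hψβ⟩, Set.right_mem_Icc.mpr ha'b'⟩
    have htQ : (t : ℝ) ∉ Q := by
      rintro ⟨⟨z, hzK, hz⟩, -⟩
      apply hnot
      refine ⟨z, hzK, ?_⟩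
      have : h.symm (γ z) = t := Subtype.ext hz
      rw [← this, h.apply_symm_apply]
    set Qc : Set ℝ := Q ∩ Set.Icc a' (t : ℝ) with hQcdef
    set Qd : Set ℝ := Q ∩ Set.Icc (t : ℝ) b' with hQddef
    have hQcc : IsCompact Qc := hQc.inter_right isClosed_Icc
    have hQdc : IsCompact Qd := hQc.inter_right isClosed_Icc
    have hQcne : Qc.Nonempty := ⟨a', ha'Q, Set.left_mem_Icc.mpr hat⟩
    have hQdne : Qd.Nonempty := ⟨b', hb'Q, Set.right_mem_Icc.mpr hbt'⟩
    set c : ℝ := sSup Qc with hcdef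
    set d : ℝ := sInf Qd with hddef
    have hcQ : c ∈ Qc := hQcc.sSup_mem hQcne
    have hdQ : d ∈ Qd := hQdc.sInf_mem hQdne
    have hct : c < (t : ℝ) := lt_of_le_of_ne hcQ.2.2 (fun hc => htQ (hc ▸ hcQ.1))
    have htd : (t : ℝ) < d := lt_of_le_of_ne hdQ.2.1 (fun hc => htQ (hc ▸ hdQ.1))
    have ha'c : a' ≤ c := hcQ.2.1
    have hdb' : d ≤ b' := hdQ.2.2
    have hcd_empty : ∀ w ∈ Q, w ≤ c ∨ d ≤ w := by
      intro w hw
      rcases le_total w (t : ℝ) with hwt | hwt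
      · exact Or.inl (le_csSup hQcc.bddAbove ⟨hw, hw.2.1, hwt⟩)
      · exact Or.inr (csInf_le hQdc.bddBelow ⟨hw, hwt, hw.2.2⟩)
    set Km : Set ℝ := K ∩ ψ ⁻¹' Set.Iic c with hKm
    set Kp : Set ℝ := K ∩ ψ ⁻¹' Set.Ici d with hKp
    have hKmcl : IsClosed Km := hψcont.preimage_isClosed_of_isClosed hKc.isClosed isClosed_Iic
    have hKpcl : IsClosed Kp := hψcont.preimage_isClosed_of_isClosed hKc.isClosed isClosed_Ici
    have hKmc : IsCompact Km := hKc.of_isClosed_subset hKmcl Set.inter_subset_left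
    have hKpc : IsCompact Kp := hKc.of_isClosed_subset hKpcl Set.inter_subset_left
    have hKcov : ∀ z ∈ K, z ∈ Km ∨ z ∈ Kp := by
      intro z hz
      by_cases h1 : ψ z ≤ c
      · exact Or.inl ⟨hz, h1⟩
      by_cases h2 : d ≤ ψ z
      · exact Or.inr ⟨hz, h2⟩
      push_neg at h1 h2
      have hzQ : ψ z ∈ Q := ⟨⟨z, hz, rfl⟩, ha'c.trans h1.le, h2.le.trans hdb'⟩
      rcases hcd_empty _ hzQ with hc | hc
      · exact absurd hc (not_le.mpr h1)
      · exact absurd hc (not_le.mpr h2)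
    have hαm : α ∈ Km := ⟨hαK, by rw [Set.mem_preimage, hψα]; exact ha'c⟩
    have hβp : β ∈ Kp := ⟨hβK, by rw [Set.mem_preimage, hψβ]; exact hdb'⟩
    set v : ℝ := sInf Kp with hvdef
    have hvKp : v ∈ Kp := hKpc.sInf_mem ⟨β, hβp⟩
    have hαv : α ≤ v := csInf_le hKc.bddBelow hvKp.1
    set Kmv : Set ℝ := Km ∩ Set.Iic v with hKmv
    have hKmvc : IsCompact Kmv := hKmc.of_isClosed_subset (hKmcl.inter isClosed_Iic)
      Set.inter_subset_left
    have hKmvne : Kmv.Nonempty := ⟨α, hαm, hαv⟩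
    set u : ℝ := sSup Kmv with hudef
    have huKmv : u ∈ Kmv := hKmvc.sSup_mem hKmvne
    have hdisjmp : ∀ z, z ∈ Km → z ∈ Kp → False := by
      rintro z ⟨-, h1⟩ ⟨-, h2⟩
      rw [Set.mem_preimage, Set.mem_Iic] at h1
      rw [Set.mem_preimage, Set.mem_Ici] at h2
      linarith [hct.trans htd]
    have huv : u < v := lt_of_le_of_ne huKmv.2 (fun hc => hdisjmp u huKmv.1 (hc ▸ hvKp))
    have hIoo : Set.Ioo u v ∩ K = ∅ := by
      rw [Set.eq_empty_iff_forall_notMem]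
      rintro k ⟨hk1, hk2⟩
      rcases hKcov k hk2 with hk | hk
      · exact absurd (le_csSup hKmvc.bddAbove ⟨hk, hk1.2.le⟩) (not_le.mpr hk1.1)
      · exact absurd (csInf_le hKpc.bddBelow hk) (not_le.mpr hk1.2)
    refine ⟨(u, v), ⟨huKmv.1.1, hvKp.1, huv, hIoo⟩, ?_⟩
    refine ⟨t, ⟨?_, ?_⟩, rfl⟩
    · have hψu : ψ u ≤ c := huKmv.1.2
      exact le_trans (min_le_left _ _) (hψu.trans hct.le)
    · have hψv : d ≤ ψ v := hvKp.2
      exact le_trans (htd.le.trans hψv) (le_max_right _ _)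
  -- the ℕ-indexed families
  set BB : ℕ → Set ℝ := fun n =>
    ⋃ (g : ↥G) (_ : e g.1 = n), Set.Ioo g.1.1 g.1.2 with hBB
  set GG : ℕ → Set M := fun n => ⋃ (g : ↥G) (_ : e g.1 = n), D g.1 with hGG
  set E₁ : Set M := h '' {z : Set.Icc (0:ℝ) 1 | a ≤ (z : ℝ) ∧ (z : ℝ) ≤ a'} with hE₁
  set E₂ : Set M := h '' {z : Set.Icc (0:ℝ) 1 | b' ≤ (z : ℝ) ∧ (z : ℝ) ≤ b} with hE₂
  set F : ℕ → Set M := fun n => if n = 0 then E₁ else if n = 1 then E₂ else GG (n - 2)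
    with hF
  -- diameters of the edge sets
  have hE₁diam : EMetric.diam E₁ ≤ ENNReal.ofReal ε := by
    apply EMetric.diam_le
    rintro m ⟨z, hz, rfl⟩ m' ⟨z', hz', rfl⟩
    rw [edist_dist]
    apply ENNReal.ofReal_le_ofReal
    have key : ∀ w w' : Set.Icc (0:ℝ) 1, a ≤ (w : ℝ) → (w : ℝ) ≤ a' →
        a ≤ (w' : ℝ) → (w' : ℝ) ≤ a' → w ≤ w' → dist (h w) (h w') ≤ ε := by
      intro w w' h1 h2 h3 h4 h5
      have hle : (⟨a, ha01⟩ : Set.Icc (0:ℝ) 1) ≤ w := h1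
      have hd : dist (h w) (h w') ≤ dist (h (⟨a, ha01⟩ : Set.Icc (0:ℝ) 1)) (h w') :=
        le_trans (le_max_right _ _) (hbt ⟨a, ha01⟩ w w' hle h5)
      have hcl : dist w' (⟨a, ha01⟩ : Set.Icc (0:ℝ) 1) < δ₁ := by
        rw [Subtype.dist_eq, Real.dist_eq, abs_of_nonneg (by simp; linarith)]
        simp only []
        have hδle : δ ≤ δ₁ := min_le_left _ _
        simp
        linarith
      have hda := hδ₁ hcl
      rw [dist_comm (h w') _] at hda
      exact le_of_lt (lt_of_le_of_lt hd hda)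
    rcases le_total z z' with hzz | hzz
    · exact key z z' hz.1 hz.2 hz'.1 hz'.2 hzz
    · rw [dist_comm]
      exact key z' z hz'.1 hz'.2 hz.1 hz.2 hzz
  have hE₂diam : EMetric.diam E₂ ≤ ENNReal.ofReal ε := by
    apply EMetric.diam_le
    rintro m ⟨z, hz, rfl⟩ m' ⟨z', hz', rfl⟩
    rw [edist_dist]
    apply ENNReal.ofReal_le_ofReal
    have key : ∀ w w' : Set.Icc (0:ℝ) 1, b' ≤ (w : ℝ) → (w : ℝ) ≤ b →
        b' ≤ (w' : ℝ) → (w' : ℝ) ≤ b → w ≤ w' → dist (h w) (h w') ≤ ε := by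
      intro w w' h1 h2 h3 h4 h5
      have hle : w' ≤ (⟨b, hb01⟩ : Set.Icc (0:ℝ) 1) := h4
      have hd : dist (h w) (h w') ≤ dist (h w) (h (⟨b, hb01⟩ : Set.Icc (0:ℝ) 1)) :=
        le_trans (le_max_left _ _) (hbt w w' ⟨b, hb01⟩ h5 hle)
      have hcl : dist w (⟨b, hb01⟩ : Set.Icc (0:ℝ) 1) < δ₂ := by
        rw [Subtype.dist_eq, Real.dist_eq, abs_of_nonpos (by simp; linarith)]
        have hδle : δ ≤ δ₂ := min_le_right _ _
        simp
        linarith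
      have hdb := hδ₂ hcl
      exact le_of_lt (lt_of_le_of_lt hd hdb)
    rcases le_total z z' with hzz | hzz
    · exact key z z' hz.1 hz.2 hz'.1 hz'.2 hzz
    · rw [dist_comm]
      exact key z' z hz'.1 hz'.2 hz.1 hz.2 hzz
  -- case analysis for the gap families
  have hGBcase : ∀ n : ℕ, (GG n = ∅ ∧ BB n = ∅) ∨
      ∃ g : ↥G, e g.1 = n ∧ GG n = D g.1 ∧ BB n = Set.Ioo g.1.1 g.1.2 := by
    intro n
    by_cases hex : ∃ g : ↥G, e g.1 = n
    · obtain ⟨g, hg⟩ := hex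
      have huniq : ∀ g' : ↥G, e g'.1 = n → g' = g := by
        intro g' hg'
        exact Subtype.ext (heinj g'.1 g'.2 g.1 g.2 (hg'.trans hg.symm))
      refine Or.inr ⟨g, hg, ?_, ?_⟩
      · apply Set.eq_of_subset_of_subset
        · intro m hm
          simp only [hGG, Set.mem_iUnion] at hm
          obtain ⟨g', hg', hm⟩ := hm
          rwa [huniq g' hg'] at hm
        · intro m hm
          exact Set.mem_iUnion.mpr ⟨g, Set.mem_iUnion.mpr ⟨hg, hm⟩⟩
      · apply Set.eq_of_subset_of_subset
        · intro w hw
          simp only [hBB, Set.mem_iUnion] at hw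
          obtain ⟨g', hg', hw⟩ := hw
          rwa [huniq g' hg'] at hw
        · intro w hw
          exact Set.mem_iUnion.mpr ⟨g, Set.mem_iUnion.mpr ⟨hg, hw⟩⟩
    · push_neg at hex
      refine Or.inl ⟨?_, ?_⟩
      · rw [Set.eq_empty_iff_forall_notMem]
        intro m hm
        simp only [hGG, Set.mem_iUnion] at hm
        obtain ⟨g', hg', -⟩ := hm
        exact hex g' hg'
      · rw [Set.eq_empty_iff_forall_notMem]
        intro w hw
        simp only [hBB, Set.mem_iUnion] at hw
        obtain ⟨g', hg', -⟩ := hw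
        exact hex g' hg'
  have hIoosub : ∀ g : ℝ × ℝ, g ∈ G → Set.Ioo g.1 g.2 ⊆ Set.Icc α β \ K := by
    intro g hg w hw
    refine ⟨⟨(hKsub hg.1).1.trans hw.1.le, hw.2.le.trans (hKsub hg.2.1).2⟩, fun hwK =>
      Set.eq_empty_iff_forall_notMem.mp hg.2.2.2 w ⟨hw, hwK⟩⟩
  -- sum over the gap families
  have hBBmeas : ∀ n, MeasurableSet (BB n) := fun n =>
    MeasurableSet.iUnion fun g => MeasurableSet.iUnion fun _ => measurableSet_Ioo
  have hBBdisj : Pairwise (Function.onFun Disjoint BB) := by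
    intro n m hnm
    rw [Function.onFun, Set.disjoint_left]
    intro w hw hw'
    simp only [hBB, Set.mem_iUnion] at hw hw'
    obtain ⟨g, hg, hwg⟩ := hw
    obtain ⟨g', hg', hwg'⟩ := hw'
    have hne : g.1 ≠ g'.1 := by
      intro hc
      apply hnm
      rw [← hg, ← hg', hc]
    exact Set.eq_empty_iff_forall_notMem.mp
      (hGdisj g.1 g.2 g'.1 g'.2 (fun hc => hne hc)) w ⟨hwg, hwg'⟩
  have hsumBB : ∑' n, volume (BB n) = volume (⋃ n, BB n) :=
    (measure_iUnion hBBdisj hBBmeas).symm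
  have hBBsub : (⋃ n, BB n) ⊆ Set.Icc α β \ K := by
    intro w hw
    rw [Set.mem_iUnion] at hw
    obtain ⟨n, hw⟩ := hw
    simp only [hBB, Set.mem_iUnion] at hw
    obtain ⟨g, -, hw⟩ := hw
    exact hIoosub g.1 g.2 hw
  have hGGdiam : ∀ n, EMetric.diam (GG n) ≤ volume (BB n) := by
    intro n
    rcases hGBcase n with ⟨h1, h2⟩ | ⟨g, -, h1, h2⟩
    · rw [h1, h2]
      exact EMetric.diam_empty.le.trans zero_le
    · rw [h1, h2, Real.volume_Ioo]
      exact hDdiam g.1 g.2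
  have hsumGG : ∑' n, EMetric.diam (GG n) ≤ volume (Set.Icc α β \ K) :=
    calc ∑' n, EMetric.diam (GG n) ≤ ∑' n, volume (BB n) := ENNReal.tsum_le_tsum hGGdiam
    _ = volume (⋃ n, BB n) := hsumBB
    _ ≤ volume (Set.Icc α β \ K) := measure_mono hBBsub
  -- sum over F
  have hF0 : F 0 = E₁ := by simp [hF]
  have hF1 : F 1 = E₂ := by simp [hF]
  have hF2 : ∀ n, F (n + 2) = GG n := by intro n; simp [hF]
  have hFsum : ∑' n, EMetric.diam (F n) =
      EMetric.diam E₁ + (EMetric.diam E₂ + ∑' n, EMetric.diam (GG n)) := by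
    rw [tsum_eq_zero_add' ENNReal.summable, tsum_eq_zero_add' ENNReal.summable, hF0]
    exact congrArg₂ (· + ·) rfl (congrArg₂ (· + ·) (congrArg EMetric.diam hF1)
      (tsum_congr fun n => congrArg EMetric.diam (hF2 n)))
  have hρεr : ρ + ε < r := by
    simp only [hε]
    linarith
  have hεr : ε < r := by
    simp only [hε]
    linarith
  have htotal : ∑' n, EMetric.diam (F n) < ENNReal.ofReal r := by
    rw [hFsum]
    have h1 : EMetric.diam E₁ + (EMetric.diam E₂ + ∑' n, EMetric.diam (GG n))
        ≤ ENNReal.ofReal ε + (ENNReal.ofReal ε + volume (Set.Icc α β \ K)) :=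
      add_le_add hE₁diam (add_le_add hE₂diam hsumGG)
    refine lt_of_le_of_lt h1 ?_
    have h2 : ENNReal.ofReal ε + (ENNReal.ofReal ε + volume (Set.Icc α β \ K))
        < ENNReal.ofReal ε + (ENNReal.ofReal ε + ENNReal.ofReal (ρ + ε)) := by
      refine ENNReal.add_lt_add_left ENNReal.ofReal_ne_top ?_
      exact ENNReal.add_lt_add_left ENNReal.ofReal_ne_top hgapE
    refine h2.trans_le ?_
    rw [← ENNReal.ofReal_add hε0.le (by linarith), ← ENNReal.ofReal_add hε0.le (by linarith)]
    apply ENNReal.ofReal_le_ofReal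
    simp only [hε]
    linarith
  have hsmall : ∀ n, EMetric.diam (F n) < ENNReal.ofReal r := by
    intro n
    match n with
    | 0 =>
      rw [hF0]
      exact lt_of_le_of_lt hE₁diam ((ENNReal.ofReal_lt_ofReal_iff hr).mpr hεr)
    | 1 =>
      rw [hF1]
      exact lt_of_le_of_lt hE₂diam ((ENNReal.ofReal_lt_ofReal_iff hr).mpr hεr)
    | (n + 2) =>
      rw [hF2]
      rcases hGBcase n with ⟨h1, -⟩ | ⟨g, -, h1, -⟩
      · rw [h1]
        exact lt_of_le_of_lt EMetric.diam_empty.le (ENNReal.ofReal_pos.mpr hr)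
      · rw [h1]
        refine lt_of_le_of_lt (hDdiam g.1 g.2) ?_
        have heq : ENNReal.ofReal (g.1.2 - g.1.1) = volume (Set.Ioo g.1.1 g.1.2) :=
          (Real.volume_Ioo).symm
        rw [heq]
        refine lt_of_le_of_lt (measure_mono (hIoosub g.1 g.2)) ?_
        exact lt_of_lt_of_le hgapE (ENNReal.ofReal_le_ofReal hρεr.le)
  -- final assembly
  refine ⟨γ '' K, ⋃ n, F n, ?_, ?_, ?_⟩
  · intro m hm
    have hzP : ((h.symm m : Set.Icc (0:ℝ) 1) : ℝ) ∈ P := ⟨h.symm m, ⟨m, hm, rfl⟩, rfl⟩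
    have hhz : h (h.symm m) = m := h.apply_symm_apply m
    have haz : a ≤ ((h.symm m : Set.Icc (0:ℝ) 1) : ℝ) := csInf_le hPbdd hzP
    have hzb : ((h.symm m : Set.Icc (0:ℝ) 1) : ℝ) ≤ b := le_csSup hPbdda hzP
    by_cases h1 : ((h.symm m : Set.Icc (0:ℝ) 1) : ℝ) < a'
    · right
      refine Set.mem_iUnion.mpr ⟨0, ?_⟩
      rw [hF0]
      exact ⟨h.symm m, ⟨haz, h1.le⟩, hhz⟩
    by_cases h2 : b' < ((h.symm m : Set.Icc (0:ℝ) 1) : ℝ)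
    · right
      refine Set.mem_iUnion.mpr ⟨1, ?_⟩
      rw [hF1]
      exact ⟨h.symm m, ⟨h2.le, hzb⟩, hhz⟩
    push_neg at h1 h2
    by_cases h3 : m ∈ γ '' K
    · exact Or.inl h3
    · obtain ⟨g, hgG, hmD⟩ := hcover (h.symm m) h1 h2 (by rwa [hhz])
      right
      refine Set.mem_iUnion.mpr ⟨e g + 2, ?_⟩
      rw [hF2]
      rw [hhz] at hmD
      exact Set.mem_iUnion.mpr ⟨⟨g, hgG⟩, Set.mem_iUnion.mpr ⟨rfl, hmD⟩⟩
  · refine lt_of_le_of_lt ?_ htotal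
    exact iInf_le_of_le F (iInf_le_of_le subset_rfl (iInf_le _ hsmall))
  · have him := hγlip.hausdorffMeasure_image_le (zero_le_one (α := ℝ))
    have him' : μH[1] (γ '' K) ≤ μH[1] K := by simpa using him
    refine lt_of_le_of_lt him' ?_
    rw [MeasureTheory.hausdorffMeasure_real]
    refine lt_of_le_of_lt (measure_mono hKsub) ?_
    rw [Real.volume_Icc]
    exact ENNReal.ofReal_lt_top
end

section
/- Let (M,d) be a 1-bounded turning arc and let T ⊆ M be σ-finite for the Hausdorff 1-measure computed with respect to the pseudometric d_ur (i.e., T is a countable union of sets T_n such that sup_{δ>0} inf{Σᵢ sup_{x,y∈Eᵢ} d_ur(x,y) : T_n ⊆ ⋃ᵢ Eᵢ, each Eᵢ of d_ur-diameter < δ} < ∞). Then T is H¹-σ-finite with respect to the metric d. -/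
open Metric Set MeasureTheory
open scoped ENNReal NNReal

/-- The Hausdorff 1-pre-measure at scale `δ` with respect to the pseudometric `d_ur`. -/
noncomputable def durPre {M : Type*} [MetricSpace M] (δ : ℝ≥0∞) (S : Set M) : ℝ≥0∞ :=
  ⨅ (E : ℕ → Set M) (_ : S ⊆ ⋃ i, E i) (_ : ∀ i, durDiam (E i) < δ),
    ∑' i, durDiam (E i)

/-- The Hausdorff 1-measure with respect to the pseudometric `d_ur`. -/
noncomputable def durH1 {M : Type*} [MetricSpace M] (S : Set M) : ℝ≥0∞ :=
  ⨆ (δ : ℝ≥0∞) (_ : 0 < δ), durPre δ S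

/-- A set is `H¹`-σ-finite (with respect to the metric `d`) if it is a countable union of
sets of finite Hausdorff 1-measure. -/
def IsH1SigmaFinite {M : Type*} [MetricSpace M] [MeasurableSpace M] [BorelSpace M]
    (S : Set M) : Prop :=
  ∃ T : ℕ → Set M, S = ⋃ n, T n ∧ ∀ n, μH[1] (T n) < ⊤

section Aux

variable {M : Type*} [MetricSpace M]

/-- The defining set of `dur x y`. -/
def durSet (x y : M) : Set ℝ :=
  { c : ℝ | ∃ (K : Set ℝ) (γ : ℝ → M), K.Nonempty ∧ IsCompact K ∧
    LipschitzOnWith 1 γ K ∧ γ (sInf K) = x ∧ γ (sSup K) = y ∧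
    c = (volume (Set.Icc (sInf K) (sSup K) \ K)).toReal }

lemma dur_eq_sInf_durSet (x y : M) : dur x y = sInf (durSet x y) := rfl

lemma durSet_nonempty (x y : M) : (durSet x y).Nonempty := by
  by_cases hxy : x = y
  · subst hxy
    refine ⟨_, {0}, fun _ => x, singleton_nonempty 0, isCompact_singleton, ?_, rfl, rfl, rfl⟩
    intro p _ q _
    simp
  · set D := dist x y with hD
    have hD0 : 0 < D := dist_pos.2 hxy
    refine ⟨_, {0, D}, fun r => if r ≤ 0 then x else y, ⟨0, by simp⟩,
      ((Set.finite_singleton D).insert 0).isCompact, ?_, ?_, ?_, rfl⟩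
    · intro p hp q hq
      have hsplit : ∀ r ∈ ({0, D} : Set ℝ), r = 0 ∨ r = D := by
        intro r hr; simpa using hr
      have habs : |(0:ℝ) - D| = D := by rw [abs_of_nonpos (by linarith)]; ring
      rcases hsplit p hp with rfl | rfl <;> rcases hsplit q hq with rfl | rfl
      · simp
      · have hnle : ¬ (D ≤ 0) := not_le.2 hD0
        simp only [if_pos le_rfl, if_neg hnle]
        rw [edist_dist, edist_dist, ENNReal.coe_one, one_mul]
        apply ENNReal.ofReal_le_ofReal
        rw [Real.dist_eq, habs, ← hD]
      · have hnle : ¬ (D ≤ 0) := not_le.2 hD0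
        simp only [if_pos le_rfl, if_neg hnle]
        rw [edist_dist, edist_dist, ENNReal.coe_one, one_mul]
        apply ENNReal.ofReal_le_ofReal
        have h1 : dist D (0:ℝ) = D := by rw [Real.dist_eq, sub_zero, abs_of_nonneg hD0.le]
        rw [h1, dist_comm y x, ← hD]
      · simp
    · have h1 : sInf ({0, D} : Set ℝ) = 0 := by
        rw [csInf_pair]; exact inf_eq_left.2 hD0.le
      rw [h1]; simp
    · have h2 : sSup ({0, D} : Set ℝ) = D := by
        rw [csSup_pair]; exact sup_eq_right.2 hD0.le
      rw [h2]
      show (if D ≤ 0 then x else y) = y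
      rw [if_neg (not_le.2 hD0)]

lemma exists_dur_witness (x y : M) {β : ℝ} (hβ : 0 < β) :
    ∃ (K : Set ℝ) (γ : ℝ → M), K.Nonempty ∧ IsCompact K ∧ LipschitzOnWith 1 γ K ∧
      γ (sInf K) = x ∧ γ (sSup K) = y ∧
      volume (Set.Icc (sInf K) (sSup K) \ K) ≤ ENNReal.ofReal (dur x y + β) := by
  obtain ⟨c, hc, hclt⟩ := Real.lt_sInf_add_pos (durSet_nonempty x y) hβ
  obtain ⟨K, γ, hne, hK, hγ, hx, hy, hcval⟩ := hc
  refine ⟨K, γ, hne, hK, hγ, hx, hy, ?_⟩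
  have hfin : volume (Set.Icc (sInf K) (sSup K) \ K) ≠ ⊤ := by
    refine ne_top_of_le_ne_top ?_ (measure_mono Set.diff_subset)
    rw [Real.volume_Icc]; exact ENNReal.ofReal_ne_top
  have : volume (Set.Icc (sInf K) (sSup K) \ K) = ENNReal.ofReal c := by
    rw [hcval, ENNReal.ofReal_toReal hfin]
  rw [this]
  exact ENNReal.ofReal_le_ofReal (le_of_lt hclt)

lemma ofReal_dur_le_durDiam {E : Set M} {x y : M} (hx : x ∈ E) (hy : y ∈ E) :
    ENNReal.ofReal (dur x y) ≤ durDiam E :=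
  le_iSup_of_le x (le_iSup_of_le hx (le_iSup_of_le y (le_iSup_of_le hy le_rfl)))

/-- Gap endpoints of a compact set around a point `u` of a "hole". -/
lemma gap_basic {K : Set ℝ} (hK : IsCompact K) (hne : K.Nonempty) {u : ℝ}
    (hu : u ∈ Set.Icc (sInf K) (sSup K) \ K) :
    sSup (K ∩ Set.Iic u) ∈ K ∧ sSup (K ∩ Set.Iic u) < u ∧
    sInf (K ∩ Set.Ici u) ∈ K ∧ u < sInf (K ∩ Set.Ici u) ∧
    Set.Ioo (sSup (K ∩ Set.Iic u)) (sInf (K ∩ Set.Ici u)) ∩ K = ∅ := by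
  obtain ⟨⟨hu1, hu2⟩, huK⟩ := hu
  have hL : IsCompact (K ∩ Set.Iic u) := hK.inter_right isClosed_Iic
  have hLne : (K ∩ Set.Iic u).Nonempty := ⟨sInf K, hK.sInf_mem hne, hu1⟩
  have hR : IsCompact (K ∩ Set.Ici u) := hK.inter_right isClosed_Ici
  have hRne : (K ∩ Set.Ici u).Nonempty := ⟨sSup K, hK.sSup_mem hne, hu2⟩
  have hcmem : sSup (K ∩ Set.Iic u) ∈ K ∩ Set.Iic u := hL.sSup_mem hLne
  have hdmem : sInf (K ∩ Set.Ici u) ∈ K ∩ Set.Ici u := hR.sInf_mem hRne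
  have hclt : sSup (K ∩ Set.Iic u) < u :=
    lt_of_le_of_ne hcmem.2 (fun hh => huK (hh ▸ hcmem.1))
  refine ⟨hcmem.1, hclt, hdmem.1, ?_, ?_⟩
  · exact lt_of_le_of_ne hdmem.2 (fun hh => huK (hh.symm ▸ hdmem.1))
  · ext k
    simp only [Set.mem_inter_iff, Set.mem_Ioo, Set.mem_empty_iff_false, iff_false, not_and]
    rintro ⟨hk1, hk2⟩ hkK
    rcases le_total k u with hku | huk
    · exact absurd (le_csSup hL.bddAbove ⟨hkK, hku⟩) (not_le.2 hk1)
    · exact absurd (csInf_le hR.bddBelow ⟨hkK, huk⟩) (not_le.2 hk2)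

/-- Uniqueness of the gap containing a point. -/
lemma gap_eq {K : Set ℝ} (hK : IsCompact K) {c d w : ℝ} (hc : c ∈ K) (hd : d ∈ K)
    (hw : w ∈ Set.Ioo c d) (hdisj : Set.Ioo c d ∩ K = ∅) :
    sSup (K ∩ Set.Iic w) = c ∧ sInf (K ∩ Set.Ici w) = d := by
  constructor
  · apply le_antisymm
    · apply csSup_le (Set.nonempty_of_mem (show c ∈ K ∩ Set.Iic w from ⟨hc, hw.1.le⟩))
      rintro k ⟨hkK, hkw⟩
      by_contra hkc
      exact (Set.eq_empty_iff_forall_notMem.1 hdisj k)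
        ⟨⟨not_le.1 hkc, lt_of_le_of_lt hkw hw.2⟩, hkK⟩
    · exact le_csSup (hK.inter_right isClosed_Iic).bddAbove ⟨hc, hw.1.le⟩
  · apply le_antisymm
    · exact csInf_le (hK.inter_right isClosed_Ici).bddBelow ⟨hd, hw.2.le⟩
    · apply le_csInf (Set.nonempty_of_mem (show d ∈ K ∩ Set.Ici w from ⟨hd, hw.2.le⟩))
      rintro k ⟨hkK, hkw⟩
      by_contra hkd
      exact (Set.eq_empty_iff_forall_notMem.1 hdisj k)
        ⟨⟨lt_of_lt_of_le hw.1 hkw, not_le.1 hkd⟩, hkK⟩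

end Aux

section Main

variable {M : Type*} [MetricSpace M]

variable (h : Set.Icc (0:ℝ) 1 ≃ₜ M)
variable (hbt : ∀ s t u : Set.Icc (0:ℝ) 1, s ≤ t → t ≤ u →
      max (dist (h s) (h t)) (dist (h t) (h u)) ≤ dist (h s) (h u))

section WithBT
include hbt

lemma bt_dist_le {s p q u : Set.Icc (0:ℝ) 1} (h1 : s ≤ p) (h2 : p ≤ q) (h3 : q ≤ u) :
    dist (h p) (h q) ≤ dist (h s) (h u) := by
  have A := hbt s p q h1 h2
  have B := hbt s q u (h1.trans h2) h3
  calc dist (h p) (h q) ≤ dist (h s) (h q) := le_trans (le_max_right _ _) A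
    _ ≤ dist (h s) (h u) := le_trans (le_max_left _ _) B

lemma diam_image_uIcc (v w : Set.Icc (0:ℝ) 1) :
    EMetric.diam (h '' Set.uIcc v w) ≤ edist (h v) (h w) := by
  apply EMetric.diam_le
  rintro z ⟨p, hp, rfl⟩ z' ⟨q, hq, rfl⟩
  have key : ∀ p q : Set.Icc (0:ℝ) 1, p ∈ Set.uIcc v w → q ∈ Set.uIcc v w → p ≤ q →
      dist (h p) (h q) ≤ dist (h v) (h w) := by
    intro p q hp hq hpq
    rw [Set.uIcc] at hp hq
    have hb : dist (h p) (h q) ≤ dist (h (v ⊓ w)) (h (v ⊔ w)) :=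
      bt_dist_le h hbt hp.1 hpq hq.2
    rcases le_total v w with hvw | hvw
    · rwa [inf_eq_left.2 hvw, sup_eq_right.2 hvw] at hb
    · rw [inf_eq_right.2 hvw, sup_eq_left.2 hvw] at hb
      rwa [dist_comm (h w)] at hb
    
  rcases le_total p q with hpq | hpq
  · rw [edist_dist, edist_dist]
    exact ENNReal.ofReal_le_ofReal (key p q hp hq hpq)
  · rw [edist_comm, edist_dist, edist_dist]
    exact ENNReal.ofReal_le_ofReal (key q p hq hp hpq)

end WithBT

/-- Crossing lemma: a point of the arc between the endpoints of a Lipschitz piece is either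
in the image, or inside the image of a "gap". -/
lemma crossing {K : Set ℝ} {γ : ℝ → M} (hK : IsCompact K) (hne : K.Nonempty)
    (hγ : LipschitzOnWith 1 γ K) (t : Set.Icc (0:ℝ) 1)
    (ht1 : h.symm (γ (sInf K)) ≤ t) (ht2 : t ≤ h.symm (γ (sSup K)))
    (hno : h t ∉ γ '' K) :
    ∃ c ∈ K, ∃ d ∈ K, c < d ∧ Set.Ioo c d ∩ K = ∅ ∧
      t ∈ Set.uIcc (h.symm (γ c)) (h.symm (γ d)) := by
  set σ : ℝ → ℝ := fun k => ((h.symm (γ k) : Set.Icc (0:ℝ) 1) : ℝ) with hσ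
  have hσcont : ContinuousOn σ K :=
    (continuous_subtype_val.comp h.symm.continuous).comp_continuousOn hγ.continuousOn
  have hστ : ∀ k, σ k = ((h.symm (γ k) : Set.Icc (0:ℝ) 1) : ℝ) := fun _ => rfl
  have hne' : ∀ k ∈ K, σ k ≠ (t : ℝ) := by
    intro k hk hkt
    apply hno
    refine ⟨k, hk, ?_⟩
    have : h.symm (γ k) = t := Subtype.ext hkt
    rw [← this, Homeomorph.apply_symm_apply]
  -- the "left" set
  set A : Set ℝ := {k ∈ K | σ k ≤ (t : ℝ)} with hA
  have hAclosed : IsClosed A := by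
    have : A = K ∩ σ ⁻¹' Set.Iic (t : ℝ) := by
      ext k; simp [hA, Set.mem_inter_iff, and_comm]
    rw [this]
    exact hσcont.preimage_isClosed_of_isClosed hK.isClosed isClosed_Iic
  have hAne : A.Nonempty := ⟨sInf K, hK.sInf_mem hne, ht1⟩
  have hAbdd : BddAbove A := hK.bddAbove.mono (fun k hk => hk.1)
  set c := sSup A with hc
  have hcA : c ∈ A := hAclosed.csSup_mem hAne hAbdd
  have hcK : c ∈ K := hcA.1
  have hcσ : σ c < (t : ℝ) := lt_of_le_of_ne hcA.2 (hne' c hcK)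
  -- the "right" set
  set B : Set ℝ := K ∩ Set.Ioi c with hB
  have hMσ : (t : ℝ) < σ (sSup K) := by
    have h1 : (t : ℝ) ≤ σ (sSup K) := ht2
    exact lt_of_le_of_ne h1 (fun hh => hne' _ (hK.sSup_mem hne) hh.symm)
  have hMB : sSup K ∈ B := by
    refine ⟨hK.sSup_mem hne, ?_⟩
    have h1 : c ≤ sSup K := le_csSup hK.bddAbove hcK
    rcases lt_or_eq_of_le h1 with h2 | h2
    · exact h2
    · exfalso; rw [h2] at hcσ; exact absurd hcσ (not_lt.2 hMσ.le)
  have hBne : B.Nonempty := ⟨sSup K, hMB⟩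
  have hBbdd : BddBelow B := hK.bddBelow.mono (fun k hk => hk.1)
  set d := sInf B with hd
  have hdK : d ∈ K := by
    have h1 : d ∈ closure B := csInf_mem_closure hBne hBbdd
    have h2 : closure B ⊆ closure K := closure_mono (fun k hk => hk.1)
    exact hK.isClosed.closure_subset (h2 h1)
  have hcd : c ≤ d := le_csInf hBne (fun k hk => hk.2.le)
  have hcdne : c ≠ d := by
    intro hcdeq
    -- then c is in the closure of B, contradicting continuity of σ at c
    have hcB : c ∈ closure B := hcdeq ▸ csInf_mem_closure hBne hBbdd
    have hcont : ContinuousWithinAt σ K c := hσcont.continuousWithinAt hcK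
    have hev : ∀ᶠ k in nhdsWithin c K, σ k < (t : ℝ) :=
      Filter.Tendsto.eventually_lt_const hcσ hcont
    have hev' : ∀ᶠ k in nhdsWithin c B, σ k < (t : ℝ) :=
      hev.filter_mono (nhdsWithin_mono c (fun k hk => hk.1))
    have hevB : ∀ᶠ k in nhdsWithin c B, k ∈ B := self_mem_nhdsWithin
    haveI : Filter.NeBot (nhdsWithin c B) := mem_closure_iff_nhdsWithin_neBot.1 hcB
    obtain ⟨k, hkB, hkσ⟩ := (hevB.and hev').exists
    have hkA : k ∈ A := ⟨hkB.1, hkσ.le⟩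
    exact absurd (le_csSup hAbdd hkA) (not_le.2 hkB.2)
  have hcdlt : c < d := lt_of_le_of_ne hcd hcdne
  have hdisj : Set.Ioo c d ∩ K = ∅ := by
    ext k
    simp only [Set.mem_inter_iff, Set.mem_Ioo, Set.mem_empty_iff_false, iff_false, not_and]
    rintro ⟨hk1, hk2⟩ hkK
    exact absurd (csInf_le hBbdd ⟨hkK, hk1⟩) (not_le.2 hk2)
  have hdσ : (t : ℝ) < σ d := by
    rcases lt_or_ge (t : ℝ) (σ d) with h1 | h1
    · exact h1
    · exfalso
      have : d ∈ A := ⟨hdK, h1⟩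
      exact absurd (le_csSup hAbdd this) (not_le.2 hcdlt)
  refine ⟨c, hcK, d, hdK, hcdlt, hdisj, ?_⟩
  apply Set.mem_uIcc.2
  left
  constructor
  · exact Subtype.coe_le_coe.1 hcσ.le
  · exact Subtype.coe_le_coe.1 hdσ.le

lemma segment_cover (hbt : ∀ s t u : Set.Icc (0:ℝ) 1, s ≤ t → t ≤ u →
      max (dist (h s) (h t)) (dist (h t) (h u)) ≤ dist (h s) (h u))
    {K : Set ℝ} {γ : ℝ → M} (hK : IsCompact K) (hne : K.Nonempty)
    (hγ : LipschitzOnWith 1 γ K) :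
    ∃ F : ℕ → Set M,
      (∀ t : Set.Icc (0:ℝ) 1, h.symm (γ (sInf K)) ≤ t → t ≤ h.symm (γ (sSup K)) →
        h t ∈ γ '' K ∪ ⋃ i, F i) ∧
      (∀ i, EMetric.diam (F i) ≤ volume (Set.Icc (sInf K) (sSup K) \ K)) ∧
      ∑' i, EMetric.diam (F i) ≤ volume (Set.Icc (sInf K) (sSup K) \ K) := by
  classical
  set U : Set ℝ := Set.Icc (sInf K) (sSup K) \ K with hU
  set e : ℕ → ℚ := fun n => (Denumerable.eqv ℚ).symm n with he
  set cp : ℝ → ℝ := fun u => sSup (K ∩ Set.Iic u) with hcp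
  set dp : ℝ → ℝ := fun u => sInf (K ∩ Set.Ici u) with hdp
  set pred : ℕ → Prop := fun n => ((e n : ℝ) ∈ U) ∧
    ∀ m < n, ((e m : ℝ)) ∉ Set.Ioo (cp (e n)) (dp (e n)) with hpreddef
  set G : ℕ → Set ℝ := fun n => if pred n then Set.Ioo (cp (e n)) (dp (e n)) else ∅ with hG
  set F : ℕ → Set M := fun n => if pred n then
      h '' Set.uIcc (h.symm (γ (cp (e n)))) (h.symm (γ (dp (e n)))) else ∅ with hF
  have hGsub : ∀ n, G n ⊆ U := by
    intro n
    by_cases hn : pred n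
    · simp only [hG, if_pos hn]
      obtain ⟨hc1, hc2, hd1, hd2, hdisj⟩ := gap_basic hK hne hn.1
      intro w hw
      constructor
      · constructor
        · exact (csInf_le hK.bddBelow hc1).trans hw.1.le
        · exact hw.2.le.trans (le_csSup hK.bddAbove hd1)
      · intro hwK
        exact (Set.eq_empty_iff_forall_notMem.1 hdisj w) ⟨hw, hwK⟩
    · simp only [hG, if_neg hn]; exact Set.empty_subset _
  have hdiamG : ∀ n, EMetric.diam (F n) ≤ volume (G n) := by
    intro n
    by_cases hn : pred n
    · simp only [hG, hF, if_pos hn]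
      obtain ⟨hc1, hc2, hd1, hd2, hdisj⟩ := gap_basic hK hne hn.1
      calc EMetric.diam (h '' Set.uIcc (h.symm (γ (cp (e n)))) (h.symm (γ (dp (e n)))))
          ≤ edist (h (h.symm (γ (cp (e n))))) (h (h.symm (γ (dp (e n))))) :=
            diam_image_uIcc h hbt _ _
        _ = edist (γ (cp (e n))) (γ (dp (e n))) := by
            rw [Homeomorph.apply_symm_apply, Homeomorph.apply_symm_apply]
        _ ≤ 1 * edist (cp (e n)) (dp (e n)) := by
            simpa using hγ hc1 hd1
        _ = volume (Set.Ioo (cp (e n)) (dp (e n))) := by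
            rw [one_mul, edist_dist, Real.dist_eq, Real.volume_Ioo,
              abs_of_nonpos (by linarith [hc2.trans hd2])]
            congr 1; ring
    · simp only [hG, hF, if_neg hn]; simp [EMetric.diam]
  have hkey : ∀ n m, n < m → Disjoint (G n) (G m) := by
    intro n m hnm
    rw [Set.disjoint_iff_inter_eq_empty]
    by_cases hn : pred n
    · by_cases hm : pred m
      · rw [Set.eq_empty_iff_forall_notMem]
        rintro w ⟨hwn, hwm⟩
        simp only [hG, if_pos hn, if_pos hm] at hwn hwm
        obtain ⟨hcn1, hcn2, hdn1, hdn2, hdisjn⟩ := gap_basic hK hne hn.1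
        obtain ⟨hcm1, hcm2, hdm1, hdm2, hdisjm⟩ := gap_basic hK hne hm.1
        obtain ⟨hwc, hwd⟩ := gap_eq hK hcn1 hdn1 hwn hdisjn
        obtain ⟨hwc', hwd'⟩ := gap_eq hK hcm1 hdm1 hwm hdisjm
        have hioo : Set.Ioo (cp (e n)) (dp (e n)) = Set.Ioo (cp (e m)) (dp (e m)) := by
          simp only [hcp, hdp]
          rw [← hwc, ← hwd, hwc', hwd']
        exact hm.2 n hnm (hioo ▸ ⟨hcn2, hdn2⟩)
      · simp [hG, if_neg hm]
    · simp [hG, if_neg hn]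
  have hGdisj : Pairwise (Function.onFun Disjoint G) := by
    intro n m hnm
    rcases lt_or_gt_of_ne hnm with h1 | h1
    · exact hkey n m h1
    · exact (hkey m n h1).symm
  have hGmeas : ∀ n, MeasurableSet (G n) := by
    intro n
    by_cases hn : pred n
    · simp only [hG, if_pos hn]; exact measurableSet_Ioo
    · simp only [hG, if_neg hn]; exact MeasurableSet.empty
  have hsum : ∑' n, volume (G n) ≤ volume U := by
    rw [← measure_iUnion hGdisj hGmeas]
    exact measure_mono (Set.iUnion_subset hGsub)
  refine ⟨F, ?_, ?_, ?_⟩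
  · intro t ht1 ht2
    by_cases hmem : h t ∈ γ '' K
    · exact Or.inl hmem
    · right
      obtain ⟨c, hcK, d, hdK, hcd, hdisj, htIcc⟩ := crossing h hK hne hγ t ht1 ht2 hmem
      obtain ⟨q, hq1, hq2⟩ := exists_rat_btwn hcd
      obtain ⟨n₀, hn₀⟩ := (Denumerable.eqv ℚ).symm.surjective q
      have hP : ∃ n, (e n : ℝ) ∈ Set.Ioo c d := ⟨n₀, by rw [he]; simp only []; rw [hn₀]; exact ⟨hq1, hq2⟩⟩
      set n1 := Nat.find hP with hn1
      have hfind : (e n1 : ℝ) ∈ Set.Ioo c d := Nat.find_spec hP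
      obtain ⟨hwc, hwd⟩ := gap_eq hK hcK hdK hfind hdisj
      have hcpn : cp (e n1) = c := hwc
      have hdpn : dp (e n1) = d := hwd
      have hpredn : pred n1 := by
        constructor
        · constructor
          · constructor
            · exact (csInf_le hK.bddBelow hcK).trans hfind.1.le
            · exact hfind.2.le.trans (le_csSup hK.bddAbove hdK)
          · intro hmemK
            exact (Set.eq_empty_iff_forall_notMem.1 hdisj _) ⟨hfind, hmemK⟩
        · intro m hm hmem2
          rw [hcpn, hdpn] at hmem2
          exact Nat.find_min hP hm hmem2
      refine Set.mem_iUnion.2 ⟨n1, ?_⟩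
      simp only [hF, if_pos hpredn]
      rw [hcpn, hdpn]
      exact ⟨t, htIcc, rfl⟩
  · intro i
    exact (hdiamG i).trans ((measure_mono (hGsub i)).trans le_rfl)
  · calc ∑' i, EMetric.diam (F i) ≤ ∑' i, volume (G i) := ENNReal.tsum_le_tsum hdiamG
      _ ≤ volume U := hsum

set_option maxHeartbeats 1000000 in
lemma tsum_prepend2_le {c1 c2 r : ℝ≥0∞} {f : ℕ → ℝ≥0∞}
    (h0 : f 0 ≤ c1) (h1 : f 1 ≤ c2) (hrest : ∑' n, f (n + 2) ≤ r) :
    ∑' n, f n ≤ c1 + c2 + r := by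
  have e1 : ∑' n, f n = f 0 + ∑' n, f (n + 1) := tsum_eq_zero_add' ENNReal.summable
  have e2 : ∑' n, f (n + 1) = f 1 + ∑' n, f (n + 1 + 1) :=
    tsum_eq_zero_add' (f := fun n => f (n + 1)) ENNReal.summable
  have e3 : ∑' n, f (n + 1 + 1) = ∑' n, f (n + 2) := by
    apply tsum_congr; intro n; congr 1
  rw [e1, e2, e3]
  calc f 0 + (f 1 + ∑' n, f (n + 2)) ≤ c1 + (c2 + r) := by gcongr
    _ = c1 + c2 + r := by ring

lemma process [MeasurableSpace M] [BorelSpace M]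
    (hbt : ∀ s t u : Set.Icc (0:ℝ) 1, s ≤ t → t ≤ u →
      max (dist (h s) (h t)) (dist (h t) (h u)) ≤ dist (h s) (h u))
    (E : Set M) {β : ℝ} (hβ : 0 < β) :
    ∃ (R : Set M) (F : ℕ → Set M), μH[1] R < ⊤ ∧ E ⊆ R ∪ ⋃ i, F i ∧
      (∀ i, EMetric.diam (F i) ≤ durDiam E + ENNReal.ofReal β) ∧
      ∑' i, EMetric.diam (F i) ≤ durDiam E + 3 * ENNReal.ofReal β := by
  classical
  rcases E.eq_empty_or_nonempty with rfl | hEne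
  · refine ⟨∅, fun _ => ∅, ?_, ?_, ?_, ?_⟩
    · simp
    · simp
    · simp [EMetric.diam]
    · simp [EMetric.diam]
  -- endpoints of the parameter interval hull of E
  set Av : Set ℝ := (fun z => ((h.symm z : Set.Icc (0:ℝ) 1) : ℝ)) '' E with hAv
  have hAvne : Av.Nonempty := hEne.image _
  have hAvsub : Av ⊆ Set.Icc 0 1 := by
    rintro _ ⟨z, _, rfl⟩; exact (h.symm z).2
  have hAvbddb : BddBelow Av := ⟨0, fun w hw => (hAvsub hw).1⟩
  have hAvbdda : BddAbove Av := ⟨1, fun w hw => (hAvsub hw).2⟩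
  set a : ℝ := sInf Av with ha
  set b : ℝ := sSup Av with hb
  have hab : a ≤ b := csInf_le_csSup hAvne hAvbddb hAvbdda
  have ha01 : a ∈ Set.Icc (0:ℝ) 1 := by
    obtain ⟨w, hw⟩ := id hAvne
    exact ⟨le_csInf hAvne (fun v hv => (hAvsub hv).1),
      (csInf_le hAvbddb hw).trans (hAvsub hw).2⟩
  have hb01 : b ∈ Set.Icc (0:ℝ) 1 := by
    obtain ⟨w, hw⟩ := id hAvne
    exact ⟨((hAvsub hw).1).trans (le_csSup hAvbdda hw),
      csSup_le hAvne (fun v hv => (hAvsub hv).2)⟩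
  set pa : Set.Icc (0:ℝ) 1 := ⟨a, ha01⟩ with hpa
  set pb : Set.Icc (0:ℝ) 1 := ⟨b, hb01⟩ with hpb
  have hwmem : ∀ z ∈ E, a ≤ ((h.symm z : Set.Icc (0:ℝ) 1) : ℝ) ∧
      ((h.symm z : Set.Icc (0:ℝ) 1) : ℝ) ≤ b := by
    intro z hz
    exact ⟨csInf_le hAvbddb ⟨z, hz, rfl⟩, le_csSup hAvbdda ⟨z, hz, rfl⟩⟩
  -- pick points of E close (in parameter) to the endpoints
  obtain ⟨η₁, hη₁, hcont₁⟩ := Metric.continuousAt_iff.1 (h.continuous.continuousAt (x := pa)) β hβ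
  obtain ⟨η₂, hη₂, hcont₂⟩ := Metric.continuousAt_iff.1 (h.continuous.continuousAt (x := pb)) β hβ
  obtain ⟨a', ha'mem, ha'lt⟩ := Real.lt_sInf_add_pos hAvne hη₁
  have ha'ge : a ≤ a' := csInf_le hAvbddb ha'mem
  obtain ⟨x₁, hx₁E, hx₁val⟩ := ha'mem
  obtain ⟨b', hb'mem, hb'gt⟩ := exists_lt_of_lt_csSup hAvne (show b - η₂ < b by linarith)
  have hb'le : b' ≤ b := le_csSup hAvbdda hb'mem
  obtain ⟨x₂, hx₂E, hx₂val⟩ := hb'mem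
  set p₁ : Set.Icc (0:ℝ) 1 := h.symm x₁ with hp₁
  set p₂ : Set.Icc (0:ℝ) 1 := h.symm x₂ with hp₂
  have hp₁val : (p₁ : ℝ) = a' := hx₁val
  have hp₂val : (p₂ : ℝ) = b' := hx₂val
  have hdist₁ : dist (h pa) (h p₁) < β := by
    rw [dist_comm]
    apply hcont₁
    rw [Subtype.dist_eq, hp₁val, Real.dist_eq, abs_of_nonneg (by simp [hpa]; linarith)]
    simp only [hpa]
    linarith
  have hdist₂ : dist (h p₂) (h pb) < β := by
    apply hcont₂
    rw [Subtype.dist_eq, hp₂val, Real.dist_eq, abs_of_nonpos (by simp [hpb]; linarith)]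
    simp only [hpb]
    linarith
  have hdiam₁ : EMetric.diam (h '' Set.uIcc pa p₁) ≤ ENNReal.ofReal β := by
    refine (diam_image_uIcc h hbt pa p₁).trans ?_
    rw [edist_dist]
    exact ENNReal.ofReal_le_ofReal hdist₁.le
  have hdiam₂ : EMetric.diam (h '' Set.uIcc p₂ pb) ≤ ENNReal.ofReal β := by
    refine (diam_image_uIcc h hbt p₂ pb).trans ?_
    rw [edist_dist]
    exact ENNReal.ofReal_le_ofReal hdist₂.le
  have hmem₁ : ∀ z ∈ E, ((h.symm z : Set.Icc (0:ℝ) 1) : ℝ) ≤ a' →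
      z ∈ h '' Set.uIcc pa p₁ := by
    intro z hz hle
    refine ⟨h.symm z, ?_, h.apply_symm_apply z⟩
    apply Set.mem_uIcc.2
    left
    constructor
    · exact Subtype.coe_le_coe.1 (by rw [hpa]; exact (hwmem z hz).1)
    · exact Subtype.coe_le_coe.1 (by rw [hp₁val]; exact hle)
  have hmem₂ : ∀ z ∈ E, b' ≤ ((h.symm z : Set.Icc (0:ℝ) 1) : ℝ) →
      z ∈ h '' Set.uIcc p₂ pb := by
    intro z hz hle
    refine ⟨h.symm z, ?_, h.apply_symm_apply z⟩
    apply Set.mem_uIcc.2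
    left
    constructor
    · exact Subtype.coe_le_coe.1 (by rw [hp₂val]; exact hle)
    · exact Subtype.coe_le_coe.1 (by rw [hpb]; exact (hwmem z hz).2)
  by_cases horder : a' ≤ b'
  · -- main case: get a dur-witness between x₁ and x₂
    obtain ⟨K, γ, hKne, hK, hγ, hγ₁, hγ₂, hvol⟩ := exists_dur_witness x₁ x₂ hβ
    have hvol' : volume (Set.Icc (sInf K) (sSup K) \ K) ≤ durDiam E + ENNReal.ofReal β :=
      hvol.trans ((ENNReal.ofReal_add_le).trans
        (add_le_add_left (ofReal_dur_le_durDiam hx₁E hx₂E) _))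
    obtain ⟨Fg, hcov, hdiamg, hsumg⟩ := segment_cover h hbt hK hKne hγ
    set F : ℕ → Set M := fun n => match n with
      | 0 => h '' Set.uIcc pa p₁
      | 1 => h '' Set.uIcc p₂ pb
      | (k + 2) => Fg k with hFdef
    refine ⟨γ '' K, F, ?_, ?_, ?_, ?_⟩
    · -- the Lipschitz image has finite H¹
      have h1 : μH[1] (γ '' K) ≤ ((1:ℝ≥0) : ℝ≥0∞) ^ (1:ℝ) * μH[1] K :=
        hγ.hausdorffMeasure_image_le zero_le_one
      have h2 : (μH[1] : Measure ℝ) K = volume K := by rw [hausdorffMeasure_real]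
      calc μH[1] (γ '' K) ≤ ((1:ℝ≥0) : ℝ≥0∞) ^ (1:ℝ) * μH[1] K := h1
        _ = volume K := by rw [h2]; simp
        _ < ⊤ := hK.measure_lt_top
    · -- coverage
      intro z hz
      rcases le_or_gt ((h.symm z : Set.Icc (0:ℝ) 1) : ℝ) a' with hle | hgt
      · exact Or.inr (Set.mem_iUnion.2 ⟨0, hmem₁ z hz hle⟩)
      rcases le_or_gt b' ((h.symm z : Set.Icc (0:ℝ) 1) : ℝ) with hge | hlt
      · exact Or.inr (Set.mem_iUnion.2 ⟨1, hmem₂ z hz hge⟩)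
      -- middle: use the segment cover
      have hle1 : h.symm (γ (sInf K)) ≤ h.symm z := by
        rw [hγ₁]
        exact Subtype.coe_le_coe.1
          (by rw [show ((h.symm x₁ : Set.Icc (0:ℝ) 1) : ℝ) = a' from hx₁val]; exact hgt.le)
      have hle2 : h.symm z ≤ h.symm (γ (sSup K)) := by
        rw [hγ₂]
        exact Subtype.coe_le_coe.1
          (by rw [show ((h.symm x₂ : Set.Icc (0:ℝ) 1) : ℝ) = b' from hx₂val]; exact hlt.le)
      have hcovz := hcov (h.symm z) hle1 hle2
      rw [h.apply_symm_apply] at hcovz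
      rcases hcovz with hL | hR
      · exact Or.inl hL
      · obtain ⟨i, hi⟩ := Set.mem_iUnion.1 hR
        exact Or.inr (Set.mem_iUnion.2 ⟨i + 2, hi⟩)
    · -- diameters
      intro i
      match i with
      | 0 => exact hdiam₁.trans (le_add_left le_rfl)
      | 1 => exact hdiam₂.trans (le_add_left le_rfl)
      | (k + 2) => exact (hdiamg k).trans hvol'
    · -- total sum
      have : ∑' n, EMetric.diam (F (n + 2)) ≤ durDiam E + ENNReal.ofReal β := by
        refine le_trans ?_ hvol'
        exact le_trans (le_of_eq (tsum_congr (fun n => rfl))) hsumg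
      calc ∑' n, EMetric.diam (F n)
          ≤ ENNReal.ofReal β + ENNReal.ofReal β + (durDiam E + ENNReal.ofReal β) :=
            tsum_prepend2_le hdiam₁ hdiam₂ this
        _ = durDiam E + 3 * ENNReal.ofReal β := by ring
  · -- degenerate case: the two end pieces already cover E
    push_neg at horder
    set F : ℕ → Set M := fun n => match n with
      | 0 => h '' Set.uIcc pa p₁
      | 1 => h '' Set.uIcc p₂ pb
      | (_ + 2) => (∅ : Set M) with hFdef
    refine ⟨∅, F, by simp, ?_, ?_, ?_⟩
    · intro z hz
      rcases le_or_gt ((h.symm z : Set.Icc (0:ℝ) 1) : ℝ) a' with hle | hgt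
      · exact Or.inr (Set.mem_iUnion.2 ⟨0, hmem₁ z hz hle⟩)
      · exact Or.inr (Set.mem_iUnion.2 ⟨1, hmem₂ z hz (by linarith)⟩)
    · intro i
      match i with
      | 0 => exact hdiam₁.trans (le_add_left le_rfl)
      | 1 => exact hdiam₂.trans (le_add_left le_rfl)
      | (k + 2) => simpa [hFdef, EMetric.diam] using (zero_le : (0:ℝ≥0∞) ≤ durDiam E + ENNReal.ofReal β)
    · have : ∑' n, EMetric.diam (F (n + 2)) ≤ (0 : ℝ≥0∞) := by
        simp [hFdef, EMetric.diam]
      calc ∑' n, EMetric.diam (F n)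
          ≤ ENNReal.ofReal β + ENNReal.ofReal β + 0 := tsum_prepend2_le hdiam₁ hdiam₂ this
        _ ≤ durDiam E + 3 * ENNReal.ofReal β := by
            rw [add_zero]
            have h3 : ENNReal.ofReal β + ENNReal.ofReal β ≤ 3 * ENNReal.ofReal β := by
              rw [show (3:ℝ≥0∞) = 1 + 1 + 1 by norm_num, add_mul, add_mul, one_mul]
              exact le_self_add
            exact h3.trans le_add_self

end Main

/-- If `(M,d)` is a 1-bounded turning arc and `T ⊆ M` is σ-finite for the Hausdorff
1-measure computed with respect to the pseudometric `d_ur`, then `T` is `H¹`-σ-finite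
with respect to the metric `d`. -/
theorem inverse_sigmaFinite_bounded_turning_arc
    {M : Type*} [MetricSpace M] [MeasurableSpace M] [BorelSpace M]
    (h : Set.Icc (0:ℝ) 1 ≃ₜ M)
    (hbt : ∀ s t u : Set.Icc (0:ℝ) 1, s ≤ t → t ≤ u →
      max (dist (h s) (h t)) (dist (h t) (h u)) ≤ dist (h s) (h u))
    (T : Set M)
    (hT : ∃ Tn : ℕ → Set M, T = ⋃ n, Tn n ∧ ∀ n, durH1 (Tn n) < ⊤) :
    IsH1SigmaFinite T := by
  classical
  obtain ⟨Tn, rfl, hTn⟩ := hT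
  have key : ∀ S : Set M, durH1 S < ⊤ →
      ∃ U : ℕ → Set M, S ⊆ ⋃ k, U k ∧ ∀ k, μH[1] (U k) < ⊤ := by
    intro S hS
    -- covers at every scale with controlled total dur-diameter
    have hscale : ∀ n : ℕ, ∃ Efam : ℕ → Set M, S ⊆ ⋃ j, Efam j ∧
        (∀ j, durDiam (Efam j) < ENNReal.ofReal (1/(n+1))) ∧
        ∑' j, durDiam (Efam j) < durH1 S + 1 := by
      intro n
      have hpos : (0:ℝ≥0∞) < ENNReal.ofReal (1/(n+1)) := by
        rw [ENNReal.ofReal_pos]; positivity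
      have h1 : durPre (ENNReal.ofReal (1/(n+1))) S ≤ durH1 S :=
        le_iSup_of_le _ (le_iSup_of_le hpos le_rfl)
      have h2 : durPre (ENNReal.ofReal (1/(n+1))) S < durH1 S + 1 :=
        h1.trans_lt (ENNReal.lt_add_right hS.ne one_ne_zero)
      rw [durPre] at h2
      obtain ⟨Efam, h3⟩ := iInf_lt_iff.1 h2
      obtain ⟨hcov, h4⟩ := iInf_lt_iff.1 h3
      obtain ⟨hsmall, h5⟩ := iInf_lt_iff.1 h4
      exact ⟨Efam, hcov, hsmall, h5⟩
    choose Efam hcov hsmall hsumE using hscale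
    have hproc : ∀ n j : ℕ, ∃ (R : Set M) (F : ℕ → Set M), μH[1] R < ⊤ ∧
        Efam n j ⊆ R ∪ ⋃ i, F i ∧
        (∀ i, EMetric.diam (F i) ≤ durDiam (Efam n j) +
          ENNReal.ofReal ((1/(n+1)) * (1/2)^j)) ∧
        ∑' i, EMetric.diam (F i) ≤ durDiam (Efam n j) +
          3 * ENNReal.ofReal ((1/(n+1)) * (1/2)^j) := by
      intro n j
      exact process h hbt (Efam n j) (by positivity)
    choose R F hRfin hEcov hFdiam hFsum using hproc
    set Bad : Set M := S \ ⋃ (p : ℕ × ℕ), R p.1 p.2 with hBad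
    have hhalfpow : ∀ j : ℕ, ((1:ℝ)/2)^j ≤ 1 := by
      intro j
      apply pow_le_one₀ <;> norm_num
    have hBadfin : μH[1] Bad < ⊤ := by
      set r : ℕ → ℝ≥0∞ := fun n => ENNReal.ofReal (2 * ((1:ℝ)/(n+1))) with hr
      have hrt : Filter.Tendsto r Filter.atTop (nhds 0) := by
        have h0 : Filter.Tendsto (fun n : ℕ => 2 * ((1:ℝ)/(n+1)))
            Filter.atTop (nhds 0) := by
          simpa using (tendsto_one_div_add_atTop_nhds_zero_nat).const_mul (2:ℝ)
        have h1 := ENNReal.tendsto_ofReal h0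
        rwa [ENNReal.ofReal_zero] at h1
      have hdiam : ∀ n : ℕ, ∀ p : ℕ × ℕ,
          EMetric.diam (F n p.1 p.2) ≤ r n := by
        rintro n ⟨j, i⟩
        refine (hFdiam n j i).trans ?_
        have e1 : durDiam (Efam n j) ≤ ENNReal.ofReal (1/(n+1)) := (hsmall n j).le
        have e2 : ENNReal.ofReal ((1/(n+1)) * ((1:ℝ)/2)^j) ≤ ENNReal.ofReal (1/(n+1)) := by
          apply ENNReal.ofReal_le_ofReal
          exact mul_le_of_le_one_right (by positivity) (hhalfpow j)
        calc durDiam (Efam n j) + ENNReal.ofReal ((1/(n+1)) * ((1:ℝ)/2)^j)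
            ≤ ENNReal.ofReal (1/(n+1)) + ENNReal.ofReal (1/(n+1)) := add_le_add e1 e2
          _ = r n := by
              rw [hr, ← ENNReal.ofReal_add (by positivity) (by positivity)]
              congr 1
              ring
      have hcovB : ∀ n : ℕ, Bad ⊆ ⋃ p : ℕ × ℕ, F n p.1 p.2 := by
        intro n z hz
        obtain ⟨hzS, hzR⟩ := hz
        obtain ⟨j, hj⟩ := Set.mem_iUnion.1 (hcov n hzS)
        rcases hEcov n j hj with hzRnj | hzF
        · exact absurd (Set.mem_iUnion.2 ⟨(n, j), hzRnj⟩) hzR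
        · obtain ⟨i, hi⟩ := Set.mem_iUnion.1 hzF
          exact Set.mem_iUnion.2 ⟨(j, i), hi⟩
      have hle := MeasureTheory.Measure.hausdorffMeasure_le_liminf_tsum (X := M) 1 Bad r hrt
        (fun n (p : ℕ × ℕ) => F n p.1 p.2)
        (Filter.Eventually.of_forall hdiam) (Filter.Eventually.of_forall hcovB)
      set c₀ : ℝ≥0∞ := ∑' j : ℕ, 3 * ENNReal.ofReal (((1:ℝ)/2)^j) with hc₀def
      have hc₀ : c₀ ≠ ⊤ := by
        rw [hc₀def]
        have : ∀ j : ℕ, ENNReal.ofReal (((1:ℝ)/2)^j) = (ENNReal.ofReal ((1:ℝ)/2))^j := by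
          intro j; rw [ENNReal.ofReal_pow (by norm_num)]
        rw [tsum_congr (fun j => by rw [this j]), ENNReal.tsum_mul_left,
          ENNReal.tsum_geometric]
        apply ENNReal.mul_ne_top (by norm_num)
        rw [Ne, ENNReal.inv_eq_top, tsub_eq_zero_iff_le]
        rw [not_le]
        exact ENNReal.ofReal_lt_one.2 (by norm_num)
      have hbound : ∀ n : ℕ,
          (∑' p : ℕ × ℕ, EMetric.diam (F n p.1 p.2) ^ (1:ℝ)) ≤ durH1 S + 1 + c₀ := by
        intro n
        have e0 : (∑' p : ℕ × ℕ, EMetric.diam (F n p.1 p.2) ^ (1:ℝ))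
            = ∑' j : ℕ, ∑' i : ℕ, EMetric.diam (F n j i) := by
          simp only [ENNReal.rpow_one]
          exact ENNReal.tsum_prod (f := fun j i => EMetric.diam (F n j i))
        rw [e0]
        have e1 : ∑' j : ℕ, ∑' i : ℕ, EMetric.diam (F n j i)
            ≤ ∑' j : ℕ, (durDiam (Efam n j) + 3 * ENNReal.ofReal ((1/(n+1)) * ((1:ℝ)/2)^j)) :=
          ENNReal.tsum_le_tsum (fun j => hFsum n j)
        refine e1.trans ?_
        rw [ENNReal.tsum_add]
        apply add_le_add
        · exact (hsumE n).le
        · rw [hc₀def]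
          apply ENNReal.tsum_le_tsum
          intro j
          gcongr
          apply mul_le_of_le_one_left (by positivity)
          rw [div_le_one (by positivity)]
          linarith [Nat.cast_nonneg (α := ℝ) n]
      have hfin : durH1 S + 1 + c₀ < ⊤ :=
        ENNReal.add_lt_top.2 ⟨ENNReal.add_lt_top.2 ⟨hS, ENNReal.one_lt_top⟩,
          lt_top_iff_ne_top.2 hc₀⟩
      refine lt_of_le_of_lt (hle.trans ?_) hfin
      exact Filter.liminf_le_of_frequently_le' (Filter.Frequently.of_forall hbound)
    -- assemble the pieces
    set e2 : ℕ ≃ ℕ × ℕ := (Denumerable.eqv (ℕ × ℕ)).symm with he2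
    refine ⟨fun k => match k with
      | 0 => Bad
      | (k + 1) => R (e2 k).1 (e2 k).2, ?_, ?_⟩
    · intro z hz
      by_cases hzR : z ∈ ⋃ (p : ℕ × ℕ), R p.1 p.2
      · obtain ⟨p, hp⟩ := Set.mem_iUnion.1 hzR
        refine Set.mem_iUnion.2 ⟨(Denumerable.eqv (ℕ × ℕ)) p + 1, ?_⟩
        simpa [he2] using hp
      · exact Set.mem_iUnion.2 ⟨0, ⟨hz, hzR⟩⟩
    · intro k
      match k with
      | 0 => exact hBadfin
      | (k + 1) => exact hRfin (e2 k).1 (e2 k).2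
  -- combine over the countably many pieces
  choose U hUcov hUfin using fun n => key (Tn n) (hTn n)
  set e2 : ℕ ≃ ℕ × ℕ := (Denumerable.eqv (ℕ × ℕ)).symm with he2
  refine ⟨fun i => Tn (e2 i).1 ∩ U (e2 i).1 (e2 i).2, ?_, ?_⟩
  · ext z
    simp only [Set.mem_iUnion]
    constructor
    · rintro ⟨n, hn⟩
      obtain ⟨k, hk⟩ := Set.mem_iUnion.1 (hUcov n hn)
      refine ⟨(Denumerable.eqv (ℕ × ℕ)) (n, k), ?_⟩
      simp only [he2, Equiv.symm_apply_apply]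
      exact ⟨hn, hk⟩
    · rintro ⟨i, hi⟩
      exact ⟨(e2 i).1, hi.1⟩
  · intro i
    exact lt_of_le_of_lt (measure_mono Set.inter_subset_right) (hUfin (e2 i).1 (e2 i).2)
end
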